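/- arXiv:1502.07645 — 6 statements merged into one kernel-verified Lean document; each statement's English description precedes it below -/
import Mathlib

section
/- Let 𝒳 and Θ be measurable spaces, p : 𝒳 × Θ → (0,∞) a measurable likelihood, π a prior probability measure on Θ, and B ≥ 0 such that |log p(x, θ)| ≤ B for all x ∈ 𝒳 and θ ∈ Θ. Then the mechanism that, on input a dataset X ∈ 𝒳ⁿ, outputs one sample from the posterior measure π_X is 4B-differentially private; that is, for every pair of adjacent datasets X, X′ ∈ 𝒳ⁿ and every measurable S ⊆ Θ, π_X(S) ≤ exp(4B) · π_{X′}(S). -/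
open MeasureTheory

/-- **One-Posterior-Sample mechanism is `4B`-differentially private** (bounded log-likelihood).
If `|log p(x, θ)| ≤ B` for all `x, θ`, then for any two adjacent datasets `X, X'` and any
measurable `S`, the posterior probability of `S` under `X` is at most `exp (4B)` times that
under `X'`. -/
theorem ops_posterior_sampling_is_4B_dp
    {𝒳 Θ : Type*} [MeasurableSpace 𝒳] [MeasurableSpace Θ]
    (n : ℕ) (p : 𝒳 → Θ → ℝ) (π : Measure Θ) [IsProbabilityMeasure π]
    (B : ℝ) (hB : 0 ≤ B)
    (hp_meas : Measurable (Function.uncurry p))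
    (hp_pos : ∀ x θ, 0 < p x θ)
    (hp_bound : ∀ x θ, |Real.log (p x θ)| ≤ B)
    (hint : ∀ X : Fin n → 𝒳, Integrable (fun θ => ∏ i, p (X i) θ) π)
    (hpos : ∀ X : Fin n → 𝒳, 0 < ∫ θ, ∏ i, p (X i) θ ∂π)
    (X X' : Fin n → 𝒳) (hadj : ∃ i : Fin n, ∀ j : Fin n, j ≠ i → X j = X' j)
    (S : Set Θ) (hS : MeasurableSet S) :
    (∫ θ in S, ∏ i, p (X i) θ ∂π) / (∫ θ, ∏ i, p (X i) θ ∂π)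
      ≤ Real.exp (4 * B) *
        ((∫ θ in S, ∏ i, p (X' i) θ ∂π) / (∫ θ, ∏ i, p (X' i) θ ∂π)) := by
  obtain ⟨i₀, hi₀⟩ := hadj
  -- pointwise bounds on p
  have hub : ∀ x θ, p x θ ≤ Real.exp B := by
    intro x θ
    have := (abs_le.1 (hp_bound x θ)).2
    calc p x θ = Real.exp (Real.log (p x θ)) := (Real.exp_log (hp_pos x θ)).symm
    _ ≤ Real.exp B := Real.exp_le_exp.2 this
  have hlb : ∀ x θ, Real.exp (-B) ≤ p x θ := by
    intro x θ
    have := (abs_le.1 (hp_bound x θ)).1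
    calc Real.exp (-B) ≤ Real.exp (Real.log (p x θ)) := Real.exp_le_exp.2 this
    _ = p x θ := Real.exp_log (hp_pos x θ)
  -- key pointwise product bound
  have key : ∀ (Y Z : Fin n → 𝒳), (∀ j : Fin n, j ≠ i₀ → Y j = Z j) →
      ∀ θ, ∏ i, p (Y i) θ ≤ Real.exp (2 * B) * ∏ i, p (Z i) θ := by
    intro Y Z h θ
    have hY : ∏ i, p (Y i) θ
        = p (Y i₀) θ * ∏ i ∈ Finset.univ.erase i₀, p (Y i) θ :=
      (Finset.mul_prod_erase _ _ (Finset.mem_univ i₀)).symm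
    have hZ : ∏ i, p (Z i) θ
        = p (Z i₀) θ * ∏ i ∈ Finset.univ.erase i₀, p (Z i) θ :=
      (Finset.mul_prod_erase _ _ (Finset.mem_univ i₀)).symm
    have hrest : ∏ i ∈ Finset.univ.erase i₀, p (Y i) θ
        = ∏ i ∈ Finset.univ.erase i₀, p (Z i) θ := by
      refine Finset.prod_congr rfl fun j hj => ?_
      rw [h j (Finset.ne_of_mem_erase hj)]
    have hrest_pos : 0 < ∏ i ∈ Finset.univ.erase i₀, p (Z i) θ :=
      Finset.prod_pos fun i _ => hp_pos _ _
    have hfactor : p (Y i₀) θ ≤ Real.exp (2 * B) * p (Z i₀) θ := by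
      have h1 : p (Y i₀) θ ≤ Real.exp B := hub _ _
      have h2 : Real.exp (-B) ≤ p (Z i₀) θ := hlb _ _
      have : Real.exp (2 * B) * Real.exp (-B) = Real.exp B := by
        rw [← Real.exp_add]; ring_nf
      nlinarith [Real.exp_pos (2 * B)]
    rw [hY, hZ, hrest, ← mul_assoc]
    exact mul_le_mul_of_nonneg_right hfactor hrest_pos.le
  -- integral bounds
  have hA : (∫ θ in S, ∏ i, p (X i) θ ∂π)
      ≤ Real.exp (2 * B) * ∫ θ in S, ∏ i, p (X' i) θ ∂π := by
    rw [← integral_const_mul]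
    exact setIntegral_mono_on (hint X).integrableOn
      (((hint X').const_mul _).integrableOn) hS fun θ _ => key X X' hi₀ θ
  have hC : (∫ θ, ∏ i, p (X' i) θ ∂π)
      ≤ Real.exp (2 * B) * ∫ θ, ∏ i, p (X i) θ ∂π := by
    rw [← integral_const_mul]
    exact integral_mono (hint X') ((hint X).const_mul _)
      (key X' X (fun j hj => (hi₀ j hj).symm))
  have hA0 : 0 ≤ ∫ θ in S, ∏ i, p (X i) θ ∂π :=
    setIntegral_nonneg hS fun θ _ => Finset.prod_nonneg fun i _ => (hp_pos _ _).le
  have hA'0 : 0 ≤ ∫ θ in S, ∏ i, p (X' i) θ ∂π :=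
    setIntegral_nonneg hS fun θ _ => Finset.prod_nonneg fun i _ => (hp_pos _ _).le
  have hexp : Real.exp (2 * B) * Real.exp (2 * B) = Real.exp (4 * B) := by
    rw [← Real.exp_add]; ring_nf
  rw [mul_div_assoc', div_le_div_iff₀ (hpos X) (hpos X')]
  have hkey := mul_le_mul hA hC (hpos X').le
    (mul_nonneg (Real.exp_pos (2 * B)).le hA'0)
  refine hkey.trans_eq ?_
  rw [← hexp]; ring
end

section
/- Let 𝒳 be a measurable subset of a normed vector space with ‖x‖ ≤ R for all x ∈ 𝒳, let Θ be a measurable space, let p : 𝒳 × Θ → (0,∞) be a measurable likelihood such that for every θ ∈ Θ the map x ↦ log p(x, θ) is L-Lipschitz on 𝒳, and let π be a prior probability measure on Θ. Then the mechanism that, on input a dataset X ∈ 𝒳ⁿ, outputs one sample from the posterior measure π_X is 4LR-differentially private; that is, for every pair of adjacent datasets X, X′ ∈ 𝒳ⁿ and every measurable S ⊆ Θ, π_X(S) ≤ exp(4LR) · π_{X′}(S). -/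
open MeasureTheory

/-- **One-Posterior-Sample mechanism is `4LR`-differentially private** (Lipschitz
log-likelihood on a bounded data domain). The data live in a normed vector space `E`, all
data points have norm at most `R`, and `x ↦ log p(x, θ)` is `L`-Lipschitz on that domain for
every `θ`. Then for any two adjacent datasets `X, X'` (entrywise bounded by `R`) and any
measurable `S`, the posterior probability of `S` under `X` is at most `exp (4LR)` times that
under `X'`. -/
theorem ops_posterior_sampling_is_4LR_dp
    {E Θ : Type*} [NormedAddCommGroup E] [NormedSpace ℝ E] [MeasurableSpace E]
    [MeasurableSpace Θ]
    (n : ℕ) (p : E → Θ → ℝ) (π : Measure Θ) [IsProbabilityMeasure π]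
    (L R : ℝ) (hL : 0 ≤ L) (hR : 0 ≤ R)
    (hp_meas : Measurable (Function.uncurry p))
    (hp_pos : ∀ x θ, 0 < p x θ)
    (hp_lip : ∀ θ : Θ, ∀ x y : E, ‖x‖ ≤ R → ‖y‖ ≤ R →
      |Real.log (p x θ) - Real.log (p y θ)| ≤ L * ‖x - y‖)
    (hint : ∀ X : Fin n → E, (∀ i, ‖X i‖ ≤ R) →
      Integrable (fun θ => ∏ i, p (X i) θ) π)
    (hpos : ∀ X : Fin n → E, (∀ i, ‖X i‖ ≤ R) →
      0 < ∫ θ, ∏ i, p (X i) θ ∂π)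
    (X X' : Fin n → E) (hX : ∀ i, ‖X i‖ ≤ R) (hX' : ∀ i, ‖X' i‖ ≤ R)
    (hadj : ∃ i : Fin n, ∀ j : Fin n, j ≠ i → X j = X' j)
    (S : Set Θ) (hS : MeasurableSet S) :
    (∫ θ in S, ∏ i, p (X i) θ ∂π) / (∫ θ, ∏ i, p (X i) θ ∂π)
      ≤ Real.exp (4 * L * R) *
        ((∫ θ in S, ∏ i, p (X' i) θ ∂π) / (∫ θ, ∏ i, p (X' i) θ ∂π)) := by
  obtain ⟨i₀, hi₀⟩ := hadj
  set c := Real.exp (2 * L * R) with hc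
  have hcpos : 0 < c := Real.exp_pos _
  -- pointwise single-coordinate bound, symmetric
  have key : ∀ (Y Y' : Fin n → E), (∀ i, ‖Y i‖ ≤ R) → (∀ i, ‖Y' i‖ ≤ R) →
      (∀ j, j ≠ i₀ → Y j = Y' j) →
      ∀ θ, (∏ i, p (Y i) θ) ≤ c * ∏ i, p (Y' i) θ := by
    intro Y Y' hY hY' hcoord θ
    have hprod : ∀ Z : Fin n → E,
        (∏ i, p (Z i) θ) = p (Z i₀) θ * ∏ j ∈ Finset.univ.erase i₀, p (Z j) θ := by
      intro Z
      exact (Finset.mul_prod_erase Finset.univ _ (Finset.mem_univ i₀)).symm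
    have heq : (∏ j ∈ Finset.univ.erase i₀, p (Y j) θ)
        = ∏ j ∈ Finset.univ.erase i₀, p (Y' j) θ := by
      refine Finset.prod_congr rfl fun j hj => ?_
      rw [hcoord j (Finset.ne_of_mem_erase hj)]
    have hlog : Real.log (p (Y i₀) θ) - Real.log (p (Y' i₀) θ) ≤ 2 * L * R := by
      have h1 := hp_lip θ (Y i₀) (Y' i₀) (hY i₀) (hY' i₀)
      have h2 : ‖Y i₀ - Y' i₀‖ ≤ 2 * R := by
        calc ‖Y i₀ - Y' i₀‖ ≤ ‖Y i₀‖ + ‖Y' i₀‖ := norm_sub_le _ _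
          _ ≤ R + R := add_le_add (hY i₀) (hY' i₀)
          _ = 2 * R := by ring
      have := (abs_le.mp h1).2
      have h3 : L * ‖Y i₀ - Y' i₀‖ ≤ L * (2 * R) := by
        exact mul_le_mul_of_nonneg_left h2 hL
      nlinarith
    have hsingle : p (Y i₀) θ ≤ c * p (Y' i₀) θ := by
      have e1 : p (Y i₀) θ = Real.exp (Real.log (p (Y i₀) θ)) :=
        (Real.exp_log (hp_pos _ _)).symm
      have e2 : p (Y' i₀) θ = Real.exp (Real.log (p (Y' i₀) θ)) :=
        (Real.exp_log (hp_pos _ _)).symm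
      rw [e1, e2, hc, ← Real.exp_add]
      exact Real.exp_le_exp.mpr (by linarith)
    calc (∏ i, p (Y i) θ) = p (Y i₀) θ * ∏ j ∈ Finset.univ.erase i₀, p (Y j) θ := hprod Y
      _ ≤ (c * p (Y' i₀) θ) * ∏ j ∈ Finset.univ.erase i₀, p (Y' j) θ := by
          rw [heq]
          exact mul_le_mul_of_nonneg_right hsingle
            (Finset.prod_nonneg fun j _ => (hp_pos _ _).le)
      _ = c * ∏ i, p (Y' i) θ := by rw [hprod Y']; ring
  have key1 := key X X' hX hX' hi₀
  have key2 := key X' X hX' hX (fun j hj => (hi₀ j hj).symm)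
  have hintX := hint X hX
  have hintX' := hint X' hX'
  have hposX := hpos X hX
  have hposX' := hpos X' hX'
  -- numerator bound
  have hnum : (∫ θ in S, ∏ i, p (X i) θ ∂π) ≤ c * ∫ θ in S, ∏ i, p (X' i) θ ∂π := by
    rw [← integral_const_mul]
    exact setIntegral_mono_on hintX.integrableOn
      ((hintX'.const_mul c).integrableOn) hS (fun θ _ => key1 θ)
  -- denominator bound
  have hden : (∫ θ, ∏ i, p (X' i) θ ∂π) ≤ c * ∫ θ, ∏ i, p (X i) θ ∂π := by
    rw [← integral_const_mul]
    exact integral_mono hintX' (hintX.const_mul c) key2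
  have hnum' : 0 ≤ ∫ θ in S, ∏ i, p (X' i) θ ∂π :=
    setIntegral_nonneg hS fun θ _ => Finset.prod_nonneg fun j _ => (hp_pos _ _).le
  have hexp : Real.exp (4 * L * R) = c * c := by
    rw [hc, ← Real.exp_add]; ring_nf
  rw [hexp, mul_div_assoc' , div_le_div_iff₀ hposX hposX']
  nlinarith [mul_le_mul hnum hden (le_of_lt hposX') (by positivity : (0:ℝ) ≤ c * ∫ θ in S, ∏ i, p (X' i) θ ∂π)]
end

section
/- Let 𝒳 and Θ be measurable spaces, p : 𝒳 × Θ → (0,∞) a measurable likelihood with |log p(x, θ)| ≤ B for all x ∈ 𝒳 and θ ∈ Θ, and π a prior probability measure on Θ. Define the marginal likelihood of a dataset X = (x₁,…,xₙ) ∈ 𝒳ⁿ as m(X) = ∫_Θ ∏ᵢ p(xᵢ, θ) dπ(θ). Then for any two adjacent datasets X, X′ ∈ 𝒳ⁿ (differing in exactly one coordinate), m(X) ≤ exp(2B) · m(X′). -/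
open MeasureTheory

/-- **Stability of the marginal likelihood.** If `|log p(x, θ)| ≤ B` for all `x, θ`, then for
any two adjacent datasets `X, X'` the marginal likelihoods
`m(X) = ∫ ∏ᵢ p(xᵢ, θ) dπ(θ)` satisfy `m(X) ≤ exp (2B) · m(X')`. -/
theorem marginal_likelihood_stability
    {𝒳 Θ : Type*} [MeasurableSpace 𝒳] [MeasurableSpace Θ]
    (n : ℕ) (p : 𝒳 → Θ → ℝ) (π : Measure Θ) [IsProbabilityMeasure π]
    (B : ℝ) (hB : 0 ≤ B)
    (hp_meas : Measurable (Function.uncurry p))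
    (hp_pos : ∀ x θ, 0 < p x θ)
    (hp_bound : ∀ x θ, |Real.log (p x θ)| ≤ B)
    (hint : ∀ X : Fin n → 𝒳, Integrable (fun θ => ∏ i, p (X i) θ) π)
    (hpos : ∀ X : Fin n → 𝒳, 0 < ∫ θ, ∏ i, p (X i) θ ∂π)
    (X X' : Fin n → 𝒳) (hadj : ∃ i : Fin n, ∀ j : Fin n, j ≠ i → X j = X' j) :
    (∫ θ, ∏ i, p (X i) θ ∂π) ≤ Real.exp (2 * B) * ∫ θ, ∏ i, p (X' i) θ ∂π := by
  obtain ⟨i₀, hi⟩ := hadj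
  have key : ∀ θ, (∏ i, p (X i) θ) ≤ Real.exp (2 * B) * ∏ i, p (X' i) θ := by
    intro θ
    have hub : ∀ x, p x θ ≤ Real.exp B := fun x => by
      have := (abs_le.mp (hp_bound x θ)).2
      calc p x θ = Real.exp (Real.log (p x θ)) := (Real.exp_log (hp_pos x θ)).symm
        _ ≤ Real.exp B := Real.exp_le_exp.mpr this
    have hlb : ∀ x, Real.exp (-B) ≤ p x θ := fun x => by
      have := (abs_le.mp (hp_bound x θ)).1
      calc Real.exp (-B) ≤ Real.exp (Real.log (p x θ)) := Real.exp_le_exp.mpr this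
        _ = p x θ := Real.exp_log (hp_pos x θ)
    rw [← Finset.mul_prod_erase Finset.univ _ (Finset.mem_univ i₀),
        ← Finset.mul_prod_erase Finset.univ (fun i => p (X' i) θ) (Finset.mem_univ i₀),
        ← mul_assoc]
    have hprod_eq : (∏ i ∈ Finset.univ.erase i₀, p (X i) θ)
        = ∏ i ∈ Finset.univ.erase i₀, p (X' i) θ := by
      refine Finset.prod_congr rfl fun j hj => ?_
      rw [hi j (Finset.mem_erase.mp hj).1]
    rw [hprod_eq]
    refine mul_le_mul_of_nonneg_right ?_ (Finset.prod_nonneg fun j _ => (hp_pos _ _).le)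
    calc p (X i₀) θ ≤ Real.exp B := hub _
      _ = Real.exp (2 * B) * Real.exp (-B) := by rw [← Real.exp_add]; ring_nf
      _ ≤ Real.exp (2 * B) * p (X' i₀) θ :=
        mul_le_mul_of_nonneg_left (hlb _) (Real.exp_pos _).le
  calc (∫ θ, ∏ i, p (X i) θ ∂π)
      ≤ ∫ θ, Real.exp (2 * B) * ∏ i, p (X' i) θ ∂π :=
        integral_mono (hint X) ((hint X').const_mul _) key
    _ = Real.exp (2 * B) * ∫ θ, ∏ i, p (X' i) θ ∂π := integral_const_mul _ _
end

section
/- Let 𝒳 and Θ be measurable spaces, p : 𝒳 × Θ → (0,∞) a measurable likelihood with |log p(x, θ)| ≤ B for all x ∈ 𝒳 and θ ∈ Θ, π a prior probability measure on Θ, and ε > 0. Set ρ = min{1, ε/(4B)} and define the tempered posterior of a dataset X = (x₁,…,xₙ) ∈ 𝒳ⁿ as the probability measure π_X^ρ(S) = (∫_S ∏ᵢ p(xᵢ, θ)^ρ dπ(θ)) / (∫_Θ ∏ᵢ p(xᵢ, θ)^ρ dπ(θ)). Then the mechanism X ↦ π_X^ρ is ε-differentially private: for every pair of adjacent datasets X,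 X′ and every measurable S ⊆ Θ, π_X^ρ(S) ≤ exp(ε) · π_{X′}^ρ(S). -/
open MeasureTheory

/-- **The tempered OPS mechanism is `ε`-differentially private.** With `ρ = min 1 (ε / (4B))`,
sampling from the tempered posterior (density proportional to `∏ᵢ p(xᵢ, θ)^ρ` w.r.t. the
prior) satisfies `ε`-differential privacy: for any two adjacent datasets `X, X'` and any
measurable `S`, `π_X^ρ(S) ≤ exp ε · π_{X'}^ρ(S)`. -/
theorem ops_tempered_posterior_is_eps_dp
    {𝒳 Θ : Type*} [MeasurableSpace 𝒳] [MeasurableSpace Θ]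
    (n : ℕ) (p : 𝒳 → Θ → ℝ) (π : Measure Θ) [IsProbabilityMeasure π]
    (B ε : ℝ) (hB : 0 < B) (hε : 0 < ε)
    (hp_meas : Measurable (Function.uncurry p))
    (hp_pos : ∀ x θ, 0 < p x θ)
    (hp_bound : ∀ x θ, |Real.log (p x θ)| ≤ B)
    (hint : ∀ X : Fin n → 𝒳,
      Integrable (fun θ => ∏ i, (p (X i) θ) ^ (min 1 (ε / (4 * B)) : ℝ)) π)
    (hpos : ∀ X : Fin n → 𝒳,
      0 < ∫ θ, ∏ i, (p (X i) θ) ^ (min 1 (ε / (4 * B)) : ℝ) ∂π)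
    (X X' : Fin n → 𝒳) (hadj : ∃ i : Fin n, ∀ j : Fin n, j ≠ i → X j = X' j)
    (S : Set Θ) (hS : MeasurableSet S) :
    (∫ θ in S, ∏ i, (p (X i) θ) ^ (min 1 (ε / (4 * B)) : ℝ) ∂π) /
        (∫ θ, ∏ i, (p (X i) θ) ^ (min 1 (ε / (4 * B)) : ℝ) ∂π)
      ≤ Real.exp ε *
        ((∫ θ in S, ∏ i, (p (X' i) θ) ^ (min 1 (ε / (4 * B)) : ℝ) ∂π) /
          (∫ θ, ∏ i, (p (X' i) θ) ^ (min 1 (ε / (4 * B)) : ℝ) ∂π)) := by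
  set ρ : ℝ := min 1 (ε / (4 * B)) with hρ
  have hρpos : 0 < ρ := lt_min one_pos (div_pos hε (by positivity))
  have hρε : ρ * (4 * B) ≤ ε := by
    rw [← le_div_iff₀ (by positivity)]
    exact min_le_right _ _
  -- pointwise bounds on a single factor
  have hfac_le : ∀ x θ, (p x θ) ^ ρ ≤ Real.exp (ρ * B) := by
    intro x θ
    rw [Real.rpow_def_of_pos (hp_pos x θ), Real.exp_le_exp]
    have := (abs_le.1 (hp_bound x θ)).2
    nlinarith [hρpos.le]
  have hfac_ge : ∀ x θ, Real.exp (-(ρ * B)) ≤ (p x θ) ^ ρ := by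
    intro x θ
    rw [Real.rpow_def_of_pos (hp_pos x θ), Real.exp_le_exp]
    have := (abs_le.1 (hp_bound x θ)).1
    nlinarith [hρpos.le]
  -- pointwise bound on the products
  have key : ∀ (Y Z : Fin n → 𝒳), (∃ i : Fin n, ∀ j : Fin n, j ≠ i → Y j = Z j) →
      ∀ θ, ∏ i, (p (Y i) θ) ^ ρ ≤ Real.exp (2 * ρ * B) * ∏ i, (p (Z i) θ) ^ ρ := by
    rintro Y Z ⟨i, hi⟩ θ
    rw [← Finset.mul_prod_erase Finset.univ (fun j => (p (Y j) θ) ^ ρ) (Finset.mem_univ i),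
      ← Finset.mul_prod_erase Finset.univ (fun j => (p (Z j) θ) ^ ρ) (Finset.mem_univ i),
      ← mul_assoc]
    have hprod_eq : ∏ j ∈ Finset.univ.erase i, (p (Y j) θ) ^ ρ
        = ∏ j ∈ Finset.univ.erase i, (p (Z j) θ) ^ ρ := by
      refine Finset.prod_congr rfl fun j hj => ?_
      rw [hi j (Finset.ne_of_mem_erase hj)]
    rw [hprod_eq]
    have hprodnn : 0 ≤ ∏ j ∈ Finset.univ.erase i, (p (Z j) θ) ^ ρ :=
      Finset.prod_nonneg fun j _ => Real.rpow_nonneg (hp_pos _ _).le _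
    refine mul_le_mul_of_nonneg_right ?_ hprodnn
    calc (p (Y i) θ) ^ ρ ≤ Real.exp (ρ * B) := hfac_le _ _
      _ = Real.exp (2 * ρ * B) * Real.exp (-(ρ * B)) := by
          rw [← Real.exp_add]; ring_nf
      _ ≤ Real.exp (2 * ρ * B) * (p (Z i) θ) ^ ρ :=
          mul_le_mul_of_nonneg_left (hfac_ge _ _) (Real.exp_pos _).le
  have hadj' : ∃ i : Fin n, ∀ j : Fin n, j ≠ i → X' j = X j := by
    obtain ⟨i, hi⟩ := hadj
    exact ⟨i, fun j hj => (hi j hj).symm⟩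
  set K : ℝ := Real.exp (2 * ρ * B) with hK
  set a := ∫ θ in S, ∏ i, (p (X i) θ) ^ ρ ∂π with ha
  set b := ∫ θ, ∏ i, (p (X i) θ) ^ ρ ∂π with hb
  set c := ∫ θ in S, ∏ i, (p (X' i) θ) ^ ρ ∂π with hc
  set d := ∫ θ, ∏ i, (p (X' i) θ) ^ ρ ∂π with hd
  have hbpos : 0 < b := hpos X
  have hdpos : 0 < d := hpos X'
  have hac : a ≤ K * c := by
    calc a ≤ ∫ θ in S, K * ∏ i, (p (X' i) θ) ^ ρ ∂π := by
          refine integral_mono ((hint X).integrableOn) ?_ (fun θ => key X X' hadj θ)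
          exact ((hint X').const_mul K).integrableOn
      _ = K * c := by rw [integral_const_mul]
  have hdb : d ≤ K * b := by
    calc d ≤ ∫ θ, K * ∏ i, (p (X i) θ) ^ ρ ∂π :=
          integral_mono (hint X') ((hint X).const_mul K) (fun θ => key X' X hadj' θ)
      _ = K * b := by rw [integral_const_mul]
  have hcnn : 0 ≤ c := by
    refine integral_nonneg fun θ => ?_
    exact Finset.prod_nonneg fun j _ => Real.rpow_nonneg (hp_pos _ _).le _
  have hKpos : 0 < K := Real.exp_pos _
  have hKK : K * K ≤ Real.exp ε := by
    rw [← Real.exp_add, Real.exp_le_exp]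
    nlinarith
  rw [mul_div_assoc' (Real.exp ε), div_le_div_iff₀ hbpos hdpos]
  calc a * d ≤ (K * c) * (K * b) :=
        mul_le_mul hac hdb hdpos.le (by positivity)
    _ = (K * K) * (c * b) := by ring
    _ ≤ Real.exp ε * (c * b) := by
        refine mul_le_mul_of_nonneg_right hKK (by positivity)
    _ = Real.exp ε * c * b := by ring
end

section
/- Let δ′ ∈ (0, e⁻¹], let k be a positive integer, and let c be a real number with 0 < c < √(log(1/δ′)). Set ε = c / √(2k·log(1/δ′)). Then ε < 1 and √(2k·log(1/δ′))·ε + k·ε·(e^ε − 1) ≤ 2c. -/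
/-- For `0 ≤ x ≤ 1`, `exp x ≤ 1 + 2 * x` (via convexity of `exp`). -/
lemma exp_le_one_add_two_mul {x : ℝ} (h0 : 0 ≤ x) (h1 : x ≤ 1) :
    Real.exp x ≤ 1 + 2 * x := by
  have hconv := convexOn_exp.2 (Set.mem_univ (0 : ℝ)) (Set.mem_univ (1 : ℝ))
    (show (0:ℝ) ≤ 1 - x by linarith) h0 (show (1 - x) + x = 1 by ring)
  simp only [smul_eq_mul, mul_zero, mul_one, zero_add, Real.exp_zero] at hconv
  have he : Real.exp 1 ≤ 3 := by
    have := Real.exp_one_lt_d9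
    linarith
  nlinarith [Real.exp_nonneg (1:ℝ)]

/-- **Simplification of the advanced-composition privacy loss.** For `δ' ∈ (0, e⁻¹]`,
`k ≥ 1` and `0 < c < √(log(1/δ'))`, setting `ε = c / √(2k·log(1/δ'))` gives `ε < 1` and
`√(2k·log(1/δ'))·ε + k·ε·(e^ε − 1) ≤ 2c`. -/
theorem advanced_composition_constant
    (δ' : ℝ) (hδ'0 : 0 < δ') (hδ'1 : δ' ≤ Real.exp (-1))
    (k : ℕ) (hk : 0 < k)
    (c : ℝ) (hc0 : 0 < c) (hc1 : c < Real.sqrt (Real.log (1 / δ'))) :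
    c / Real.sqrt (2 * k * Real.log (1 / δ')) < 1 ∧
      Real.sqrt (2 * k * Real.log (1 / δ')) *
          (c / Real.sqrt (2 * k * Real.log (1 / δ'))) +
        k * (c / Real.sqrt (2 * k * Real.log (1 / δ'))) *
          (Real.exp (c / Real.sqrt (2 * k * Real.log (1 / δ'))) - 1) ≤ 2 * c := by
  set L := Real.log (1 / δ') with hLdef
  have hL1 : 1 ≤ L := by
    rw [hLdef, one_div, Real.log_inv]
    have : Real.log δ' ≤ -1 := by
      calc Real.log δ' ≤ Real.log (Real.exp (-1)) :=
            Real.log_le_log hδ'0 hδ'1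
        _ = -1 := Real.log_exp _
    linarith
  have hL0 : 0 < L := by linarith
  have hk1 : (1 : ℝ) ≤ k := by exact_mod_cast hk
  have harg : (0:ℝ) < 2 * k * L := by positivity
  set S := Real.sqrt (2 * k * L) with hSdef
  have hS0 : 0 < S := Real.sqrt_pos.mpr harg
  have hSsq : S ^ 2 = 2 * k * L := Real.sq_sqrt harg.le
  have hcS : c < S := by
    calc c < Real.sqrt L := hc1
      _ ≤ S := Real.sqrt_le_sqrt (by nlinarith)
  set ε := c / S with hεdef
  have hε0 : 0 < ε := div_pos hc0 hS0
  have hε1 : ε < 1 := (div_lt_one hS0).mpr hcS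
  refine ⟨hε1, ?_⟩
  have hfirst : S * ε = c := by
    rw [hεdef]; field_simp
  have hexp : Real.exp ε - 1 ≤ 2 * ε := by
    have := exp_le_one_add_two_mul hε0.le hε1.le
    linarith
  have hsecond : (k : ℝ) * ε * (Real.exp ε - 1) ≤ c := by
    have h1 : (k : ℝ) * ε * (Real.exp ε - 1) ≤ (k : ℝ) * ε * (2 * ε) := by
      apply mul_le_mul_of_nonneg_left hexp (by positivity)
    have h2 : (k : ℝ) * ε * (2 * ε) = c ^ 2 / L := by
      rw [hεdef]
      field_simp
      nlinarith [hSsq]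
    have hsqrtL : Real.sqrt L ≤ L := by
      nlinarith [Real.sq_sqrt hL0.le, Real.sqrt_nonneg L,
        Real.one_le_sqrt.mpr hL1]
    have h3 : c ^ 2 / L ≤ c := by
      rw [div_le_iff₀ hL0]
      nlinarith [hc1.le, Real.sqrt_nonneg L]
    linarith
  linarith
end

section
/- Let n > 4 and L > 0, and let x₁, …, xₙ ∈ ℝ^d with ‖xᵢ‖₂ ≤ L for all i. Let x₁′, …, xₙ′ be obtained from x₁, …, xₙ by replacing exactly one entry x_k by a vector x_k′ with ‖x_k′‖₂ ≤ L. Then the sample covariance matrices satisfy ‖Ĉov(x₁,…,xₙ) − Ĉov(x₁′,…,xₙ′)‖_F ≤ 7L²/(n−1). -/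
open scoped BigOperators

/-- The sample mean of `n` vectors in `ℝ^d`. -/
noncomputable def sampleMean {n d : ℕ} (X : Fin n → Fin d → ℝ) : Fin d → ℝ :=
  fun a => (∑ i, X i a) / n

/-- The (unbiased) sample covariance matrix of `n` vectors in `ℝ^d`:
`Ĉov(x₁,…,xₙ) = (1/(n−1))·Σᵢ (xᵢ − μ)(xᵢ − μ)ᵀ`. -/
noncomputable def sampleCov {n d : ℕ} (X : Fin n → Fin d → ℝ) :
    Matrix (Fin d) (Fin d) ℝ :=
  Matrix.of fun a b =>
    (∑ i, (X i a - sampleMean X a) * (X i b - sampleMean X b)) / ((n : ℝ) - 1)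

/-!
Writing `μ` for the mean, `(n - 1) Ĉov = ∑ᵢ xᵢxᵢᵀ - n μμᵀ`. Replacing `x_k` by `x_k'` moves the mean
to `μ + δ/n` with `δ = x_k' - x_k`, so `(n - 1)` times the change of `Ĉov` is the combination
`x_k x_kᵀ - x_k' x_k'ᵀ + μδᵀ + δμᵀ + δδᵀ/n` of rank-one matrices. Since `‖uvᵀ‖_F ≤ ‖u‖‖v‖`,
`‖μ‖ ≤ L` and `‖δ‖ ≤ 2L`, its Frobenius norm is at most `(1 + 1 + 2 + 2 + 4/n) L² ≤ 7L²`.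
-/

open Matrix WithLp

attribute [local instance] Matrix.frobeniusNormedAddCommGroup Matrix.frobeniusNormedSpace

theorem Fintype.sum_apply_update {ι β M : Type*} [Fintype ι] [DecidableEq ι] [AddCommGroup M]
    (g : β → M) (f : ι → β) (k : ι) (b : β) :
    ∑ i, g (Function.update f k b i) = ∑ i, g (f i) + (g b - g (f k)) := by
  simp_rw [Function.apply_update (fun _ => g), Finset.sum_update_of_mem (Finset.mem_univ k),
    ← Finset.add_sum_erase _ _ (Finset.mem_univ k), Finset.sdiff_singleton_eq_erase]
  abel

theorem norm_toLp_eq_sqrt {ι : Type*} [Fintype ι] (v : ι → ℝ) :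
    ‖toLp 2 v‖ = √(∑ i, v i ^ 2) := by
  simp [EuclideanSpace.norm_eq]

theorem Matrix.frobenius_norm_eq_sqrt {m n : Type*} [Fintype m] [Fintype n] (A : Matrix m n ℝ) :
    ‖A‖ = √(∑ i, ∑ j, A i j ^ 2) := by
  simp [frobenius_norm_def, Real.sqrt_eq_rpow]

theorem Matrix.frobenius_norm_vecMulVec_le {m n 𝕜 : Type*} [Fintype m] [Fintype n] [RCLike 𝕜]
    (u : m → 𝕜) (v : n → 𝕜) : ‖vecMulVec u v‖ ≤ ‖toLp 2 u‖ * ‖toLp 2 v‖ := by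
  simpa [vecMulVec_eq Unit] using frobenius_norm_mul (replicateCol Unit u) (replicateRow Unit v)

theorem frobenius_norm_covariance_increment_le {ι : Type*} [Fintype ι] {u v μ : ι → ℝ} {L n : ℝ}
    (hu : ‖toLp 2 u‖ ≤ L) (hv : ‖toLp 2 v‖ ≤ L) (hμ : ‖toLp 2 μ‖ ≤ L) (hn : 4 ≤ n) :
    ‖vecMulVec u u - vecMulVec v v + vecMulVec μ (v - u) + vecMulVec (v - u) μ
      + n⁻¹ • vecMulVec (v - u) (v - u)‖ ≤ 7 * L ^ 2 := by
  have hL : 0 ≤ L := (norm_nonneg _).trans hu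
  have hδ : ‖toLp 2 (v - u)‖ ≤ 2 * L := by
    rw [toLp_sub]
    linarith [norm_sub_le (toLp 2 v) (toLp 2 u)]
  have rankOne {a b : ι → ℝ} {A B : ℝ} (ha : ‖toLp 2 a‖ ≤ A) (hb : ‖toLp 2 b‖ ≤ B) :
      ‖vecMulVec a b‖ ≤ A * B :=
    (frobenius_norm_vecMulVec_le a b).trans <|
      mul_le_mul ha hb (norm_nonneg _) ((norm_nonneg _).trans ha)
  have hlast : ‖n⁻¹ • vecMulVec (v - u) (v - u)‖ ≤ L ^ 2 := by
    rw [norm_smul, Real.norm_of_nonneg (by positivity), inv_mul_le_iff₀ (by positivity)]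
    nlinarith [rankOne hδ hδ]
  calc _ ≤ ‖vecMulVec u u‖ + ‖vecMulVec v v‖ + ‖vecMulVec μ (v - u)‖ + ‖vecMulVec (v - u) μ‖
        + ‖n⁻¹ • vecMulVec (v - u) (v - u)‖ := by
        grw [norm_add₄_le, norm_sub_le]
    _ ≤ L * L + L * L + L * (2 * L) + 2 * L * L + L ^ 2 := by
        grw [rankOne hu hu, rankOne hv hv, rankOne hμ hδ, rankOne hδ hμ, hlast]
    _ = 7 * L ^ 2 := by ring

section SampleStatistics

variable {n d : ℕ} (X : Fin n → Fin d → ℝ)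

theorem sum_eq_card_smul_sampleMean : ∑ i, X i = (n : ℝ) • sampleMean X := by
  ext a
  rcases eq_or_ne n 0 with rfl | hn
  · simp
  · simp [sampleMean, Finset.sum_apply, mul_div_cancel₀, hn]

theorem sampleMean_eq_smul_sum : sampleMean X = (n : ℝ)⁻¹ • ∑ i, X i := by
  ext a
  simp [sampleMean, Finset.sum_apply, div_eq_inv_mul]

theorem norm_sampleMean_le {L : ℝ} (hL : 0 ≤ L) (hX : ∀ i, ‖toLp 2 (X i)‖ ≤ L) :
    ‖toLp 2 (sampleMean X)‖ ≤ L := by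
  rw [sampleMean_eq_smul_sum, toLp_smul, toLp_sum, norm_smul, norm_inv, Real.norm_natCast]
  calc (n : ℝ)⁻¹ * ‖∑ i, toLp 2 (X i)‖ ≤ (n : ℝ)⁻¹ * (n * L) := by
        gcongr
        simpa using norm_sum_le_of_le Finset.univ fun i _ => hX i
    _ ≤ L := by
        rcases eq_or_ne n 0 with rfl | hn
        · simpa using hL
        · rw [inv_mul_cancel_left₀ (by exact_mod_cast hn)]

theorem sampleMean_update (k : Fin n) (x' : Fin d → ℝ) :
    sampleMean (Function.update X k x') = sampleMean X + (n : ℝ)⁻¹ • (x' - X k) := by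
  rw [sampleMean_eq_smul_sum, sampleMean_eq_smul_sum, Fintype.sum_apply_update (fun v => v),
    smul_add]

theorem sampleCov_eq_smul_sub :
    sampleCov X = ((n : ℝ) - 1)⁻¹ •
      (∑ i, vecMulVec (X i) (X i) - (n : ℝ) • vecMulVec (sampleMean X) (sampleMean X)) := by
  have hsum (a : Fin d) : ∑ i, X i a = n * sampleMean X a := by
    simpa using congrFun (sum_eq_card_smul_sampleMean X) a
  ext a b
  simp only [sampleCov, of_apply, Matrix.smul_apply, Matrix.sub_apply, Matrix.sum_apply,
    vecMulVec_apply, smul_eq_mul, div_eq_inv_mul]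
  congr 1
  simp only [sub_mul, mul_sub, Finset.sum_sub_distrib, ← Finset.sum_mul, ← Finset.mul_sum, hsum,
    Finset.sum_const, Finset.card_univ, Fintype.card_fin, nsmul_eq_mul]
  ring

theorem sampleCov_sub_sampleCov_update (hn : n ≠ 0) (k : Fin n) (x' : Fin d → ℝ) :
    sampleCov X - sampleCov (Function.update X k x') = ((n : ℝ) - 1)⁻¹ •
      (vecMulVec (X k) (X k) - vecMulVec x' x' + vecMulVec (sampleMean X) (x' - X k)
        + vecMulVec (x' - X k) (sampleMean X) + (n : ℝ)⁻¹ • vecMulVec (x' - X k) (x' - X k)) := by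
  rw [sampleCov_eq_smul_sub, sampleCov_eq_smul_sub, sampleMean_update, ← smul_sub,
    Fintype.sum_apply_update (fun v => vecMulVec v v)]
  congr 1
  ext a b
  simp only [Matrix.sub_apply, Matrix.add_apply, Matrix.smul_apply, vecMulVec_apply, Pi.add_apply,
    Pi.sub_apply, Pi.smul_apply, smul_eq_mul]
  field_simp
  ring

end SampleStatistics

theorem sampleCov_sensitivity_general
    {d : ℕ} (n : ℕ) (hn : 4 < n) (L : ℝ)
    (X : Fin n → Fin d → ℝ) (k : Fin n) (x' : Fin d → ℝ)
    (hX : ∀ i, Real.sqrt (∑ a, (X i a) ^ 2) ≤ L)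
    (hx' : Real.sqrt (∑ a, (x' a) ^ 2) ≤ L) :
    Real.sqrt (∑ a, ∑ b,
        (sampleCov X a b - sampleCov (Function.update X k x') a b) ^ 2)
      ≤ 7 * L ^ 2 / ((n : ℝ) - 1) := by
  simp_rw [← norm_toLp_eq_sqrt] at hX hx'
  have hn4 : (4 : ℝ) ≤ n := by exact_mod_cast hn.le
  have hμ : ‖toLp 2 (sampleMean X)‖ ≤ L :=
    norm_sampleMean_le X ((norm_nonneg _).trans (hX k)) hX
  refine (frobenius_norm_eq_sqrt
    (sampleCov X - sampleCov (Function.update X k x'))).symm.trans_le ?_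
  have hn1 : (0 : ℝ) < n - 1 := by linarith
  rw [sampleCov_sub_sampleCov_update X (by omega) k x', norm_smul,
    Real.norm_of_nonneg (inv_nonneg.2 hn1.le), ← div_eq_inv_mul]
  gcongr
  exact frobenius_norm_covariance_increment_le (hX k) hx' hμ hn4

/-- **Sensitivity of the sample covariance operator.** If `n > 4`, all data vectors have
`ℓ₂`-norm at most `L`, and one data vector is replaced by another of norm at most `L`, then
the Frobenius norm of the change in the sample covariance matrix is at most `7L²/(n−1)`. -/
theorem sampleCov_sensitivity
    {d : ℕ} (n : ℕ) (hn : 4 < n) (L : ℝ) (hL : 0 < L)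
    (X : Fin n → Fin d → ℝ) (k : Fin n) (x' : Fin d → ℝ)
    (hX : ∀ i, Real.sqrt (∑ a, (X i a) ^ 2) ≤ L)
    (hx' : Real.sqrt (∑ a, (x' a) ^ 2) ≤ L) :
    Real.sqrt (∑ a, ∑ b,
        (sampleCov X a b - sampleCov (Function.update X k x') a b) ^ 2)
      ≤ 7 * L ^ 2 / ((n : ℝ) - 1) :=
  sampleCov_sensitivity_general n hn L X k x' hX hx'
end
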